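/- Let S be a string whose substring S[x..y] is q-periodic (q ≥ 1). Let x ≤ u ≤ v ≤ y be such that S[u..v] is a palindrome and v − u + 1 ≥ q. Then for all positions a, b with x ≤ a ≤ y, x ≤ b ≤ y and a + b = u + v, one has S[a] = S[b]. In particular, for any interval [u', v'] ⊆ [x, y] with u' + v' = u + v, the substring S[u'..v'] is a palindrome. -/

import Mathlib

/-! The palindrome `S[u..v]` makes `S` symmetric about `(u + v) / 2` on `[u, v]`. A mirror
pair `a < u`, `b > v` with `a + b = u + v` is moved inwards to `a + q`, `b - q` by periodicity,
which reduces `S a = S b` to the inner pair; since `[u, v]` has length at least `q`, this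
reaches a pair inside `[u, v]`. -/

section

variable {α : Type*} (S : ℕ → α)

def IsPeriodicOn (x y q : ℕ) : Prop :=
  ∀ t, x ≤ t → t + q ≤ y → S t = S (t + q)

def IsPalindromeOn (u v : ℕ) : Prop :=
  ∀ t, 1 ≤ t → t ≤ v - u + 1 → S (u + t - 1) = S (v + 1 - t)

/-- `S` restricted to `[x, y]` is symmetric about `c / 2`. -/
def IsSymmetricAbout (x y c : ℕ) : Prop :=
  ∀ a b, x ≤ a → a ≤ y → x ≤ b → b ≤ y → a + b = c → S a = S b

variable {S}

theorem IsPalindromeOn.isSymmetricAbout {u v : ℕ} (h : IsPalindromeOn S u v) :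
    IsSymmetricAbout S u v (u + v) := by
  intro a b hua hav _ _ hab
  have h' := h (a - u + 1) (by omega) (by omega)
  rwa [show u + (a - u + 1) - 1 = a by omega, show v + 1 - (a - u + 1) = b by omega] at h'

theorem IsSymmetricAbout.isPalindromeOn {u v : ℕ} (h : IsSymmetricAbout S u v (u + v))
    (huv : u ≤ v) : IsPalindromeOn S u v :=
  fun t ht₁ ht₂ ↦ h _ _ (by omega) (by omega) (by omega) (by omega) (by omega)

theorem IsSymmetricAbout.mono {x y x' y' c : ℕ} (h : IsSymmetricAbout S x y c)
    (hx : x ≤ x') (hy : y' ≤ y) : IsSymmetricAbout S x' y' c :=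
  fun a b hxa hay hxb hby ↦ h a b (by omega) (by omega) (by omega) (by omega)

theorem IsPeriodicOn.apply_eq_of_apply_add_eq {x y q a b : ℕ} (hper : IsPeriodicOn S x y q)
    (hxa : x ≤ a) (ha : a + q ≤ y) (hxb : x ≤ b) (hb : b + q ≤ y)
    (h : S (a + q) = S b) : S a = S (b + q) := by
  rw [hper a hxa ha, h, hper b hxb hb]

theorem IsPeriodicOn.apply_eq_of_isPalindromeOn {x y q u v a b : ℕ}
    (hper : IsPeriodicOn S x y q) (hq : 1 ≤ q) (huv : u ≤ v)
    (hlen : q ≤ v - u + 1) (hpal : IsPalindromeOn S u v)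
    (hav : a ≤ v) (hxa : x ≤ a) (hby : b ≤ y) (hsum : a + b = u + v) : S a = S b := by
  by_cases hua : u ≤ a
  · exact hpal.isSymmetricAbout a b hua hav (by omega) (by omega) hsum
  · obtain ⟨b', rfl⟩ : ∃ b', b = b' + q := ⟨b - q, by omega⟩
    exact hper.apply_eq_of_apply_add_eq hxa (by omega) (by omega) hby
      (hper.apply_eq_of_isPalindromeOn (a := a + q) (b := b') hq huv hlen hpal
        (by omega) (by omega) (by omega) (by omega))
termination_by u - a

theorem IsPeriodicOn.isSymmetricAbout_of_isPalindromeOn {x y q u v : ℕ}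
    (hper : IsPeriodicOn S x y q) (hq : 1 ≤ q) (huv : u ≤ v)
    (hlen : q ≤ v - u + 1) (hpal : IsPalindromeOn S u v) :
    IsSymmetricAbout S x y (u + v) := by
  intro a b hxa hay hxb hby hsum
  rcases le_total a b with hab | hba
  · exact hper.apply_eq_of_isPalindromeOn hq huv hlen hpal (by omega) hxa hby hsum
  · exact (hper.apply_eq_of_isPalindromeOn hq huv hlen hpal (by omega) hxb hay (by omega)).symm

end

theorem palindrome_extends_in_periodic_general {α : Type*} (S : ℕ → α) (x y q u v : ℕ)
    (hq : 1 ≤ q)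
    (hper : ∀ t, x ≤ t → t + q ≤ y → S t = S (t + q))
    (huv : u ≤ v)
    (hpal : ∀ t, 1 ≤ t → t ≤ v - u + 1 → S (u + t - 1) = S (v + 1 - t))
    (hlen : q ≤ v - u + 1) :
    (∀ a b, x ≤ a → a ≤ y → x ≤ b → b ≤ y → a + b = u + v → S a = S b) ∧
      (∀ u' v', x ≤ u' → u' ≤ v' → v' ≤ y → u' + v' = u + v →
        ∀ t, 1 ≤ t → t ≤ v' - u' + 1 → S (u' + t - 1) = S (v' + 1 - t)) := by
  have hsymm : IsSymmetricAbout S x y (u + v) :=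
    IsPeriodicOn.isSymmetricAbout_of_isPalindromeOn hper hq huv hlen hpal
  refine ⟨hsymm, fun u' v' hxu' hu'v' hv'y hsum ↦ ?_⟩
  rw [← hsum] at hsymm
  exact (hsymm.mono hxu' hv'y).isPalindromeOn hu'v'

/-- In a `q`-periodic region `S[x..y]`, a palindrome `S[u..v]` of length at least
`q` forces `S a = S b` whenever `a, b ∈ [x, y]` and `a + b = u + v`; in
particular every interval `[u', v'] ⊆ [x, y]` with the same center `u' + v' = u + v`
is a palindrome. -/
theorem palindrome_extends_in_periodic {α : Type*} (S : ℕ → α) (n x y q u v : ℕ)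
    (hq : 1 ≤ q) (hx : 1 ≤ x) (hyn : y ≤ n)
    (hper : ∀ t, x ≤ t → t + q ≤ y → S t = S (t + q))
    (hxu : x ≤ u) (huv : u ≤ v) (hvy : v ≤ y)
    (hpal : ∀ t, 1 ≤ t → t ≤ v - u + 1 → S (u + t - 1) = S (v + 1 - t))
    (hlen : q ≤ v - u + 1) :
    (∀ a b, x ≤ a → a ≤ y → x ≤ b → b ≤ y → a + b = u + v → S a = S b) ∧
      (∀ u' v', x ≤ u' → u' ≤ v' → v' ≤ y → u' + v' = u + v →
        ∀ t, 1 ≤ t → t ≤ v' - u' + 1 → S (u' + t - 1) = S (v' + 1 - t)) :=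
  palindrome_extends_in_periodic_general S x y q u v hq hper huv hpal hlen
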